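/- arXiv:1909.00335 — 15 statements merged into one kernel-verified Lean document; each statement's English description precedes it below -/
import Mathlib

section
/- Let α < 1. If r ∈ [0,∞) does not belong to the set B = {α^{-k}·γ : k = 0,1,2,…}, then the iterates φⁿ(r) converge to 0 as n → ∞. -/
open Filter

/-- The real map describing how `f(x) = a x ((x+b)/(x+c))²` transforms the p-adic
absolute value `|x|_p` when `α = |a|_p`, `β = |b|_p`, `γ = |c|_p` and `β < γ`. -/
noncomputable def phiMap (α β γ bs cs : ℝ) : ℝ → ℝ := fun r =>
  if r < β then α * β ^ 2 / γ ^ 2 * r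
  else if r = β then bs
  else if r < γ then α / γ ^ 2 * r ^ 3
  else if r = γ then cs
  else α * r

lemma phi_step (α β γ bs cs : ℝ) (hα : 0 < α) (hβ : 0 < β) (hγ : 0 < γ)
    (hbs : 0 < bs) (hβγ : β < γ) (hbsle : bs ≤ α * β ^ 3 / γ ^ 2)
    (s : ℝ) (hs : 0 ≤ s) (hsγ : s < γ) :
    0 ≤ phiMap α β γ bs cs s ∧ phiMap α β γ bs cs s ≤ α * s := by
  unfold phiMap
  rcases lt_trichotomy s β with h | h | h
  · rw [if_pos h]
    refine ⟨by positivity, ?_⟩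
    rw [div_mul_eq_mul_div, div_le_iff₀ (by positivity)]
    nlinarith [mul_nonneg (mul_nonneg hα.le hs)
      (mul_pos (show (0:ℝ) < γ + β by linarith) (show (0:ℝ) < γ - β by linarith)).le]
  · rw [if_neg (by simp [h]), if_pos h]
    refine ⟨hbs.le, ?_⟩
    have h2 : α * β ^ 3 / γ ^ 2 ≤ α * β := by
      rw [div_le_iff₀ (by positivity)]
      nlinarith [mul_nonneg (mul_nonneg hα.le hβ.le)
        (mul_pos (show (0:ℝ) < γ + β by linarith) (show (0:ℝ) < γ - β by linarith)).le]
    subst h; linarith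
  · rw [if_neg (by linarith), if_neg (by linarith [h.ne']), if_pos hsγ]
    refine ⟨by positivity, ?_⟩
    rw [div_mul_eq_mul_div, div_le_iff₀ (by positivity)]
    nlinarith [mul_nonneg (mul_nonneg hα.le hs)
      (mul_nonneg (show (0:ℝ) ≤ γ + s by linarith) (show (0:ℝ) ≤ γ - s by linarith))]

lemma phi_iter (α β γ bs cs : ℝ) (hα : 0 < α) (hβ : 0 < β) (hγ : 0 < γ)
    (hbs : 0 < bs) (hβγ : β < γ) (hbsle : bs ≤ α * β ^ 3 / γ ^ 2) (hα1 : α < 1)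
    (s : ℝ) (hs : 0 ≤ s) (hsγ : s < γ) (k : ℕ) :
    0 ≤ (phiMap α β γ bs cs)^[k] s ∧ (phiMap α β γ bs cs)^[k] s ≤ α ^ k * s := by
  induction k with
  | zero => simpa using hs
  | succ n ih =>
    obtain ⟨h0, h1⟩ := ih
    have hlt : (phiMap α β γ bs cs)^[n] s < γ := by
      have : α ^ n * s ≤ s := by
        nlinarith [pow_le_one₀ hα.le hα1.le (n := n), pow_pos hα n]
      linarith
    obtain ⟨g0, g1⟩ := phi_step α β γ bs cs hα hβ hγ hbs hβγ hbsle _ h0 hlt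
    rw [Function.iterate_succ_apply']
    refine ⟨g0, ?_⟩
    calc phiMap α β γ bs cs ((phiMap α β γ bs cs)^[n] s)
        ≤ α * ((phiMap α β γ bs cs)^[n] s) := g1
      _ ≤ α * (α ^ n * s) := by nlinarith
      _ = α ^ (n + 1) * s := by ring

lemma phi_tendsto_of_lt (α β γ bs cs : ℝ) (hα : 0 < α) (hβ : 0 < β) (hγ : 0 < γ)
    (hbs : 0 < bs) (hβγ : β < γ) (hbsle : bs ≤ α * β ^ 3 / γ ^ 2) (hα1 : α < 1)
    (s : ℝ) (hs : 0 ≤ s) (hsγ : s < γ) :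
    Tendsto (fun n => (phiMap α β γ bs cs)^[n] s) atTop (nhds 0) := by
  have hlim : Tendsto (fun n : ℕ => α ^ n * s) atTop (nhds 0) := by
    simpa using (tendsto_pow_atTop_nhds_zero_of_lt_one hα.le hα1).mul_const s
  refine squeeze_zero (fun n => (phi_iter α β γ bs cs hα hβ hγ hbs hβγ hbsle hα1 s hs hsγ n).1)
    (fun n => (phi_iter α β γ bs cs hα hβ hγ hbs hβγ hbsle hα1 s hs hsγ n).2) hlim

theorem phi_tendsto_zero_of_not_mem_B
    (α β γ bs cs : ℝ) (hα : 0 < α) (hβ : 0 < β) (hγ : 0 < γ)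
    (hbs : 0 < bs) (hcs : 0 < cs) (hβγ : β < γ)
    (hbsle : bs ≤ α * β ^ 3 / γ ^ 2) (hcsge : α * γ ≤ cs)
    (hα1 : α < 1) (r : ℝ) (hr : 0 ≤ r)
    (hrB : ∀ k : ℕ, r ≠ γ / α ^ k) :
    Tendsto (fun n => (phiMap α β γ bs cs)^[n] r) atTop (nhds 0) := by
  classical
  have hne : ∀ n : ℕ, α ^ n * r ≠ γ := by
    intro n h
    exact hrB n (by field_simp at h ⊢; linarith)
  rcases lt_or_gt_of_ne (show r ≠ γ by simpa using hrB 0) with hlt | hgt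
  · exact phi_tendsto_of_lt α β γ bs cs hα hβ hγ hbs hβγ hbsle hα1 r hr hlt
  -- r > γ : iterate is α^n r until it drops below γ
  · have hex : ∃ n : ℕ, α ^ n * r < γ := by
      have hlim : Tendsto (fun n : ℕ => α ^ n * r) atTop (nhds 0) := by
        simpa using (tendsto_pow_atTop_nhds_zero_of_lt_one hα.le hα1).mul_const r
      exact (hlim.eventually (gt_mem_nhds hγ)).exists
    set N := Nat.find hex with hN
    have hspec : α ^ N * r < γ := Nat.find_spec hex
    have hiter : ∀ n ≤ N, (phiMap α β γ bs cs)^[n] r = α ^ n * r := by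
      intro n hn
      induction n with
      | zero => simp
      | succ m ih =>
        have hm : m < N := hn
        have h1 : (phiMap α β γ bs cs)^[m] r = α ^ m * r := ih (le_of_lt hm)
        have h2 : ¬ α ^ m * r < γ := Nat.find_min hex hm
        have h3 : γ < α ^ m * r := lt_of_le_of_ne (not_lt.mp h2) (hne m).symm
        rw [Function.iterate_succ_apply', h1]
        unfold phiMap
        rw [if_neg (by linarith), if_neg (by intro h; linarith [h ▸ h3]),
          if_neg (by linarith), if_neg (hne m)]
        ring
    set s := α ^ N * r with hs'
    have hs0 : 0 ≤ s := by positivity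
    have hkey : Tendsto (fun k => (phiMap α β γ bs cs)^[k] s) atTop (nhds 0) :=
      phi_tendsto_of_lt α β γ bs cs hα hβ hγ hbs hβγ hbsle hα1 s hs0 hspec
    have heq : ∀ k : ℕ, (phiMap α β γ bs cs)^[k + N] r = (phiMap α β γ bs cs)^[k] s := by
      intro k
      rw [Function.iterate_add_apply, hiter N le_rfl]
    rw [← tendsto_add_atTop_iff_nat N]
    simpa only [heq] using hkey
end

section
/- Let α < 1 and suppose c* = α^{-k}·γ for some integer k ≥ 0. Then for every j with 1 ≤ j ≤ k+1 one has φ^j(γ) = α^{-(k-j+1)}·γ; in particular φ^{k+1}(γ) = γ, so γ is a periodic point of φ whose orbit is the (k+1)-cycle {α^{-i}·γ : 0 ≤ i ≤ k}. -/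
open Filter

/-!
Above `γ` the map is multiplication by `α < 1`, and `φ(γ) = c* = α⁻ᵏ γ`. Hence the orbit of `γ`
jumps to `α⁻ᵏ γ` and then descends through `α⁻ᵏ⁺¹ γ, …, α⁻¹ γ`, all of which lie above `γ`,
until it returns to `α · α⁻¹ γ = γ`.
-/

section phiMap

variable {α β γ bs cs : ℝ}

theorem phiMap_self (hβγ : β < γ) : phiMap α β γ bs cs γ = cs := by
  simp [phiMap, hβγ.not_gt, hβγ.ne']

theorem phiMap_of_lt (hβγ : β ≤ γ) {r : ℝ} (hr : γ < r) : phiMap α β γ bs cs r = α * r := by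
  have hβr : β < r := hβγ.trans_lt hr
  simp [phiMap, hβr.not_gt, hβr.ne', hr.not_gt, hr.ne']

theorem lt_div_pow_of_lt_one (hγ : 0 < γ) (hα : 0 < α) (hα1 : α < 1) {n : ℕ} (hn : n ≠ 0) :
    γ < γ / α ^ n := by
  rw [lt_div_iff₀ (pow_pos hα n)]
  exact mul_lt_of_lt_one_right hγ (pow_lt_one₀ hα.le hα1 hn)

variable (bs cs)

theorem phiMap_div_pow_succ (hα : 0 < α) (hα1 : α < 1) (hγ : 0 < γ) (hβγ : β ≤ γ) (m : ℕ) :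
    phiMap α β γ bs cs (γ / α ^ (m + 1)) = γ / α ^ m := by
  rw [phiMap_of_lt hβγ (lt_div_pow_of_lt_one hγ hα hα1 m.succ_ne_zero), pow_succ]
  field_simp

theorem iterate_phiMap_div_pow (hα : 0 < α) (hα1 : α < 1) (hγ : 0 < γ) (hβγ : β ≤ γ)
    (m n : ℕ) : (phiMap α β γ bs cs)^[n] (γ / α ^ (m + n)) = γ / α ^ m := by
  induction n with
  | zero => rfl
  | succ n ih =>
    rw [Function.iterate_succ_apply, ← add_assoc, phiMap_div_pow_succ bs cs hα hα1 hγ hβγ, ih]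

end phiMap

theorem phi_gamma_periodic_cycle_general
    (α β γ bs cs : ℝ) (hα : 0 < α) (hγ : 0 < γ)
    (hβγ : β < γ)
    (hα1 : α < 1) (k : ℕ) (hcsB : cs = γ / α ^ k) :
    (∀ j : ℕ, 1 ≤ j → j ≤ k + 1 →
      (phiMap α β γ bs cs)^[j] γ = γ / α ^ (k + 1 - j)) ∧
    (phiMap α β γ bs cs)^[k + 1] γ = γ := by
  have orbit : ∀ j : ℕ, 1 ≤ j → j ≤ k + 1 →
      (phiMap α β γ bs cs)^[j] γ = γ / α ^ (k + 1 - j) := by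
    intro j hj hjk
    obtain ⟨i, rfl⟩ := Nat.exists_eq_add_of_le' hj
    obtain ⟨l, rfl⟩ := Nat.exists_eq_add_of_le' (Nat.le_of_succ_le_succ hjk)
    rw [Function.iterate_succ_apply, phiMap_self hβγ, hcsB,
      iterate_phiMap_div_pow bs _ hα hα1 hγ hβγ.le, Nat.add_sub_add_right, Nat.add_sub_cancel]
  refine ⟨orbit, ?_⟩
  simpa using orbit (k + 1) le_add_self le_rfl

theorem phi_gamma_periodic_cycle
    (α β γ bs cs : ℝ) (hα : 0 < α) (hβ : 0 < β) (hγ : 0 < γ)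
    (hbs : 0 < bs) (hcs : 0 < cs) (hβγ : β < γ)
    (hbsle : bs ≤ α * β ^ 3 / γ ^ 2) (hcsge : α * γ ≤ cs)
    (hα1 : α < 1) (k : ℕ) (hcsB : cs = γ / α ^ k) :
    (∀ j : ℕ, 1 ≤ j → j ≤ k + 1 →
      (phiMap α β γ bs cs)^[j] γ = γ / α ^ (k + 1 - j)) ∧
    (phiMap α β γ bs cs)^[k + 1] γ = γ :=
  phi_gamma_periodic_cycle_general α β γ bs cs hα hγ hβγ hα1 k hcsB
end

section
/- Let α = 1. Then: (i) for every r < γ the iterates φⁿ(r) converge to 0; (ii) every r > γ is a fixed point of φ, so φⁿ(r) = r for all n; (iii) the iterates φⁿ(γ) converge to c*. -/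
open Filter

theorem phi_dynamics_of_alpha_eq_one
    (α β γ bs cs : ℝ) (hα : 0 < α) (hβ : 0 < β) (hγ : 0 < γ)
    (hbs : 0 < bs) (hcs : 0 < cs) (hβγ : β < γ)
    (hbsle : bs ≤ α * β ^ 3 / γ ^ 2) (hcsge : α * γ ≤ cs)
    (hα1 : α = 1) :
    (∀ r : ℝ, 0 ≤ r → r < γ →
      Tendsto (fun n => (phiMap α β γ bs cs)^[n] r) atTop (nhds 0)) ∧
    (∀ r : ℝ, γ < r → ∀ n : ℕ, (phiMap α β γ bs cs)^[n] r = r) ∧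
    Tendsto (fun n => (phiMap α β γ bs cs)^[n] γ) atTop (nhds cs) := by
  subst hα1
  have hγ2 : (0:ℝ) < γ ^ 2 := by positivity
  refine ⟨?_, ?_, ?_⟩
  · -- part (i)
    intro r hr0 hrγ
    set m := max r β with hm
    have hmγ : m < γ := max_lt hrγ hβγ
    have hmβ : β ≤ m := le_max_right _ _
    have hrm : r ≤ m := le_max_left _ _
    have hm0 : 0 < m := lt_of_lt_of_le hβ hmβ
    set k := (m / γ) ^ 2 with hk
    have hk0 : 0 ≤ k := sq_nonneg _
    have hk1 : k < 1 := by
      have h1 : m / γ < 1 := (div_lt_one hγ).2 hmγ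
      have h0 : 0 ≤ m / γ := by positivity
      nlinarith [sq_nonneg (m/γ)]
    have key : ∀ s : ℝ, 0 ≤ s → s ≤ m →
        0 ≤ phiMap 1 β γ bs cs s ∧ phiMap 1 β γ bs cs s ≤ k * s := by
      intro s hs0 hsm
      have hsγ : s < γ := lt_of_le_of_lt hsm hmγ
      unfold phiMap
      rcases lt_trichotomy s β with h | h | h
      · simp only [if_pos h]
        constructor
        · positivity
        · have hb2 : β ^ 2 ≤ m ^ 2 := by nlinarith
          calc 1 * β ^ 2 / γ ^ 2 * s = β ^ 2 / γ ^ 2 * s := by ring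
            _ ≤ m ^ 2 / γ ^ 2 * s := by gcongr
            _ = k * s := by rw [hk, div_pow]
      · simp only [if_neg (not_lt.2 h.ge), if_pos h]
        refine ⟨hbs.le, ?_⟩
        have hb2 : β ^ 2 ≤ m ^ 2 := by nlinarith
        have h3 : β ^ 3 ≤ m ^ 2 * β := by nlinarith [mul_le_mul_of_nonneg_right hb2 hβ.le]
        calc bs ≤ 1 * β ^ 3 / γ ^ 2 := hbsle
          _ = β ^ 3 / γ ^ 2 := by ring
          _ ≤ m ^ 2 * β / γ ^ 2 := by gcongr
          _ = k * s := by rw [hk, div_pow, h]; ring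
      · simp only [if_neg (not_lt.2 h.le), if_neg h.ne', if_pos hsγ]
        constructor
        · positivity
        · have hs2 : s ^ 2 ≤ m ^ 2 := by nlinarith
          have h3 : s ^ 3 ≤ m ^ 2 * s := by nlinarith [mul_le_mul_of_nonneg_right hs2 hs0]
          calc 1 / γ ^ 2 * s ^ 3 = s ^ 3 / γ ^ 2 := by ring
            _ ≤ m ^ 2 * s / γ ^ 2 := by gcongr
            _ = k * s := by rw [hk, div_pow]; ring
    have bound : ∀ n : ℕ, 0 ≤ (phiMap 1 β γ bs cs)^[n] r ∧
        (phiMap 1 β γ bs cs)^[n] r ≤ k ^ n * r := by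
      intro n
      induction n with
      | zero => simpa using hr0
      | succ n ih =>
        obtain ⟨ih0, ih1⟩ := ih
        have hle : (phiMap 1 β γ bs cs)^[n] r ≤ m := by
          have : k ^ n ≤ 1 := pow_le_one₀ hk0 hk1.le
          nlinarith
        obtain ⟨h0, h1⟩ := key _ ih0 hle
        rw [Function.iterate_succ_apply']
        refine ⟨h0, h1.trans ?_⟩
        calc k * (phiMap 1 β γ bs cs)^[n] r ≤ k * (k ^ n * r) := by
              exact mul_le_mul_of_nonneg_left ih1 hk0
          _ = k ^ (n + 1) * r := by ring
    have hgk : Tendsto (fun n : ℕ => k ^ n * r) atTop (nhds 0) := by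
      have := (tendsto_pow_atTop_nhds_zero_of_lt_one hk0 hk1).mul_const r
      simpa using this
    exact squeeze_zero (fun n => (bound n).1) (fun n => (bound n).2) hgk
  · -- part (ii)
    intro r hr n
    have hfix : phiMap 1 β γ bs cs r = r := by
      unfold phiMap
      have h1 : ¬ r < β := not_lt.2 (le_of_lt (hβγ.trans hr))
      have h2 : r ≠ β := (hβγ.trans hr).ne'
      have h3 : ¬ r < γ := not_lt.2 hr.le
      have h4 : r ≠ γ := hr.ne'
      simp [h1, h2, h3, h4]
    induction n with
    | zero => rfl
    | succ n ih => rw [Function.iterate_succ_apply', ih, hfix]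
  · -- part (iii)
    have hγcs : γ ≤ cs := by linarith [hcsge]
    have hstep : ∀ n : ℕ, (phiMap 1 β γ bs cs)^[n + 1] γ = cs := by
      intro n
      induction n with
      | zero =>
        rw [zero_add, Function.iterate_one]
        simp [phiMap, lt_irrefl, not_lt.2 hβγ.le, hβγ.ne']
      | succ n ih =>
        rw [Function.iterate_succ_apply', ih]
        unfold phiMap
        have h1 : ¬ cs < β := not_lt.2 (hβγ.le.trans hγcs)
        have h2 : cs ≠ β := by
          intro h; exact absurd (h ▸ hγcs) (not_le.2 hβγ)
        have h3 : ¬ cs < γ := not_lt.2 hγcs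
        by_cases h4 : cs = γ
        · simp [h1, h2, h3, h4, not_lt.2 hβγ.le, hβγ.ne']
        · simp [h1, h2, h3, h4]
    have hev : ∀ᶠ n in atTop, (fun _ : ℕ => cs) n = (phiMap 1 β γ bs cs)^[n] γ := by
      filter_upwards [eventually_ge_atTop 1] with n hn
      obtain ⟨m, rfl⟩ := Nat.exists_eq_add_of_le hn
      rw [add_comm, hstep]
    exact Tendsto.congr' hev tendsto_const_nhds
end

section
/- Let α > 1 and αβ² < γ². Then: (i) for every r < γ/√α the iterates φⁿ(r) converge to 0; (ii) γ/√α is a fixed point of φ; (iii) for every r > γ/√α the iterates φⁿ(r) tend to +∞. -/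
open Filter

/-!
Below `γ / √α` the map `φ` is bounded by a linear map of slope
`max (αβ²/γ²) (αr²/γ²) < 1` on `[0, r]`, so the orbit of `r` decays geometrically; above it
`φ` dominates a linear map of slope `min (αr²/γ²) α > 1` on `[r, ∞)`, so the orbit grows
geometrically. The threshold `γ / √α` lies strictly between `β` and `γ`, on the cubic branch
`αr³/γ²`, whose nonzero fixed point it is.
-/

theorem tendsto_iterate_nhds_zero_of_le_mul {f : ℝ → ℝ} {k r : ℝ} (hk0 : 0 ≤ k) (hk1 : k < 1)
    (hr : 0 ≤ r) (hf0 : ∀ x, 0 ≤ x → x ≤ r → 0 ≤ f x)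
    (hf : ∀ x, 0 ≤ x → x ≤ r → f x ≤ k * x) :
    Tendsto (fun n => f^[n] r) atTop (nhds 0) := by
  have bound : ∀ n : ℕ, 0 ≤ f^[n] r ∧ f^[n] r ≤ k ^ n * r := by
    intro n
    induction n with
    | zero => simpa using hr
    | succ n ih =>
      have hle : f^[n] r ≤ r :=
        ih.2.trans (mul_le_of_le_one_left hr (pow_le_one₀ hk0 hk1.le))
      rw [Function.iterate_succ_apply', pow_succ', mul_assoc]
      exact ⟨hf0 _ ih.1 hle, (hf _ ih.1 hle).trans (mul_le_mul_of_nonneg_left ih.2 hk0)⟩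
  apply squeeze_zero (fun n => (bound n).1) (fun n => (bound n).2)
  simpa using (tendsto_pow_atTop_nhds_zero_of_lt_one hk0 hk1).mul_const r

theorem tendsto_iterate_atTop_of_mul_le {f : ℝ → ℝ} {L r : ℝ} (hL : 1 < L) (hr : 0 < r)
    (hf : ∀ x, r ≤ x → L * x ≤ f x) :
    Tendsto (fun n => f^[n] r) atTop atTop := by
  have bound : ∀ n : ℕ, L ^ n * r ≤ f^[n] r := by
    intro n
    induction n with
    | zero => simp
    | succ n ih =>
      have hr_le : r ≤ f^[n] r := (le_mul_of_one_le_left hr.le (one_le_pow₀ hL.le)).trans ih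
      rw [Function.iterate_succ_apply', pow_succ', mul_assoc]
      exact (mul_le_mul_of_nonneg_left ih (by linarith)).trans (hf _ hr_le)
  exact tendsto_atTop_mono bound ((tendsto_pow_atTop_atTop_of_one_lt hL).atTop_mul_const hr)

section Threshold

variable {α γ r : ℝ}

theorem lt_div_sqrt_iff (hα : 0 < α) (hγ : 0 ≤ γ) (hr : 0 ≤ r) :
    r < γ / √α ↔ α * r ^ 2 < γ ^ 2 := by
  rw [lt_div_iff₀ (Real.sqrt_pos.2 hα), ← pow_lt_pow_iff_left₀ (by positivity) hγ two_ne_zero,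
    mul_pow, Real.sq_sqrt hα.le, mul_comm]

theorem div_sqrt_lt_iff (hα : 0 < α) (hγ : 0 ≤ γ) (hr : 0 ≤ r) :
    γ / √α < r ↔ γ ^ 2 < α * r ^ 2 := by
  rw [div_lt_iff₀ (Real.sqrt_pos.2 hα), ← pow_lt_pow_iff_left₀ hγ (by positivity) two_ne_zero,
    mul_pow, Real.sq_sqrt hα.le, mul_comm]

theorem mul_div_sqrt_sq (hα : 0 < α) : α * (γ / √α) ^ 2 = γ ^ 2 := by
  rw [div_pow, Real.sq_sqrt hα.le]
  field_simp

end Threshold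

section PhiMap

variable {α β γ bs cs : ℝ}

theorem phiMap_nonneg (hα : 0 ≤ α) (hbs : 0 ≤ bs) (hcs : 0 ≤ cs) {x : ℝ} (hx : 0 ≤ x) :
    0 ≤ phiMap α β γ bs cs x := by
  unfold phiMap
  split_ifs <;> positivity

theorem phiMap_le_mul (hα : 0 ≤ α) (hbsle : bs ≤ α * β ^ 3 / γ ^ 2) {r x : ℝ} (hrγ : r < γ)
    (hx0 : 0 ≤ x) (hxr : x ≤ r) :
    phiMap α β γ bs cs x ≤ max (α * β ^ 2 / γ ^ 2) (α * r ^ 2 / γ ^ 2) * x := by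
  unfold phiMap
  split_ifs with hxβ hxβ' hxγ
  · exact mul_le_mul_of_nonneg_right (le_max_left _ _) hx0
  · subst hxβ'
    calc bs ≤ α * x ^ 2 / γ ^ 2 * x := hbsle.trans_eq (by ring)
      _ ≤ _ := mul_le_mul_of_nonneg_right (le_max_left _ _) hx0
  · calc α / γ ^ 2 * x ^ 3 = α * x ^ 2 / γ ^ 2 * x := by ring
      _ ≤ α * r ^ 2 / γ ^ 2 * x := by gcongr
      _ ≤ _ := mul_le_mul_of_nonneg_right (le_max_right _ _) hx0
  all_goals exact absurd (hxr.trans_lt hrγ) (by order)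

theorem mul_le_phiMap (hα : 0 ≤ α) (hcsge : α * γ ≤ cs) {r x : ℝ} (hβr : β < r) (hr : 0 ≤ r)
    (hrx : r ≤ x) :
    min (α * r ^ 2 / γ ^ 2) α * x ≤ phiMap α β γ bs cs x := by
  have hx0 : 0 ≤ x := hr.trans hrx
  unfold phiMap
  split_ifs with hxβ hxβ' hxγ hxγ'
  · exact absurd (hβr.trans_le hrx) (by order)
  · exact absurd (hβr.trans_le hrx) (by order)
  · calc min (α * r ^ 2 / γ ^ 2) α * x ≤ α * r ^ 2 / γ ^ 2 * x :=
          mul_le_mul_of_nonneg_right (min_le_left _ _) hx0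
      _ ≤ α * x ^ 2 / γ ^ 2 * x := by gcongr
      _ = α / γ ^ 2 * x ^ 3 := by ring
  · subst hxγ'
    exact (mul_le_mul_of_nonneg_right (min_le_right _ _) hx0).trans hcsge
  · exact mul_le_mul_of_nonneg_right (min_le_right _ _) hx0

theorem phiMap_eq_self_of_cubic (hγ : γ ≠ 0) {x : ℝ} (hβx : β < x) (hxγ : x < γ)
    (hfix : α * x ^ 2 = γ ^ 2) : phiMap α β γ bs cs x = x := by
  rw [phiMap, if_neg hβx.not_gt, if_neg hβx.ne', if_pos hxγ]
  field_simp
  linear_combination x * hfix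

end PhiMap

theorem phi_dynamics_of_alpha_gt_one_lt_general
    (α β γ bs cs : ℝ) (hα : 0 < α) (hβ : 0 < β) (hγ : 0 < γ)
    (hbs : 0 < bs) (hcs : 0 < cs)
    (hbsle : bs ≤ α * β ^ 3 / γ ^ 2) (hcsge : α * γ ≤ cs)
    (hα1 : 1 < α) (hlt : α * β ^ 2 < γ ^ 2) :
    (∀ r : ℝ, 0 ≤ r → r < γ / Real.sqrt α →
      Tendsto (fun n => (phiMap α β γ bs cs)^[n] r) atTop (nhds 0)) ∧
    phiMap α β γ bs cs (γ / Real.sqrt α) = γ / Real.sqrt α ∧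
    (∀ r : ℝ, γ / Real.sqrt α < r →
      Tendsto (fun n => (phiMap α β γ bs cs)^[n] r) atTop atTop) := by
  have hs0 : 0 ≤ γ / √α := by positivity
  have hβs : β < γ / √α := (lt_div_sqrt_iff hα hγ.le hβ.le).2 hlt
  have hsγ : γ / √α < γ :=
    (div_sqrt_lt_iff hα hγ.le hγ.le).2 (lt_mul_of_one_lt_left (by positivity) hα1)
  refine ⟨fun r hr0 hrs => ?_, phiMap_eq_self_of_cubic hγ.ne' hβs hsγ (mul_div_sqrt_sq hα),
    fun r hsr => ?_⟩
  · have hk1 : max (α * β ^ 2 / γ ^ 2) (α * r ^ 2 / γ ^ 2) < 1 :=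
      max_lt ((div_lt_one (by positivity)).2 hlt)
        ((div_lt_one (by positivity)).2 ((lt_div_sqrt_iff hα hγ.le hr0).1 hrs))
    exact tendsto_iterate_nhds_zero_of_le_mul (by positivity) hk1 hr0
      (fun x hx _ => phiMap_nonneg hα.le hbs.le hcs.le hx)
      (fun x hx hxr => phiMap_le_mul hα.le hbsle (hrs.trans hsγ) hx hxr)
  · have hr0 : 0 < r := hs0.trans_lt hsr
    have hL1 : 1 < min (α * r ^ 2 / γ ^ 2) α :=
      lt_min ((one_lt_div (by positivity)).2 ((div_sqrt_lt_iff hα hγ.le hr0.le).1 hsr)) hα1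
    exact tendsto_iterate_atTop_of_mul_le hL1 hr0
      (fun x hrx => mul_le_phiMap hα.le hcsge (hβs.trans hsr) hr0.le hrx)

theorem phi_dynamics_of_alpha_gt_one_lt
    (α β γ bs cs : ℝ) (hα : 0 < α) (hβ : 0 < β) (hγ : 0 < γ)
    (hbs : 0 < bs) (hcs : 0 < cs) (hβγ : β < γ)
    (hbsle : bs ≤ α * β ^ 3 / γ ^ 2) (hcsge : α * γ ≤ cs)
    (hα1 : 1 < α) (hlt : α * β ^ 2 < γ ^ 2) :
    (∀ r : ℝ, 0 ≤ r → r < γ / Real.sqrt α →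
      Tendsto (fun n => (phiMap α β γ bs cs)^[n] r) atTop (nhds 0)) ∧
    phiMap α β γ bs cs (γ / Real.sqrt α) = γ / Real.sqrt α ∧
    (∀ r : ℝ, γ / Real.sqrt α < r →
      Tendsto (fun n => (phiMap α β γ bs cs)^[n] r) atTop atTop) :=
  phi_dynamics_of_alpha_gt_one_lt_general α β γ bs cs hα hβ hγ hbs hcs hbsle hcsge hα1 hlt
end

section
/- Let α > 1 and αβ² = γ². Then: (i) every r < β is a fixed point of φ, so φⁿ(r) = r for all n; (ii) the iterates φⁿ(β) converge to b*; (iii) for every r > β the iterates φⁿ(r) tend to +∞. -/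
open Filter

theorem phi_dynamics_of_alpha_gt_one_eq
    (α β γ bs cs : ℝ) (hα : 0 < α) (hβ : 0 < β) (hγ : 0 < γ)
    (hbs : 0 < bs) (hcs : 0 < cs) (hβγ : β < γ)
    (hbsle : bs ≤ α * β ^ 3 / γ ^ 2) (hcsge : α * γ ≤ cs)
    (hα1 : 1 < α) (heq : α * β ^ 2 = γ ^ 2) :
    (∀ r : ℝ, 0 ≤ r → r < β →
      phiMap α β γ bs cs r = r ∧ ∀ n : ℕ, (phiMap α β γ bs cs)^[n] r = r) ∧
    Tendsto (fun n => (phiMap α β γ bs cs)^[n] β) atTop (nhds bs) ∧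
    (∀ r : ℝ, β < r →
      Tendsto (fun n => (phiMap α β γ bs cs)^[n] r) atTop atTop) := by
  have hγ2 : (0:ℝ) < γ ^ 2 := by positivity
  have hone : α * β ^ 2 / γ ^ 2 = 1 := by rw [heq]; exact div_self hγ2.ne'
  have hfix : ∀ r : ℝ, r < β → phiMap α β γ bs cs r = r := by
    intro r hr
    simp [phiMap, hr, hone]
  have hbsβ : bs ≤ β := by
    have h3 : α * β ^ 3 / γ ^ 2 = β := by
      rw [show α * β ^ 3 = (α * β ^ 2) * β by ring, heq]
      field_simp
    linarith [hbsle]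
  have hφβ : phiMap α β γ bs cs β = bs := by
    simp [phiMap, lt_irrefl]
  have hφbs : phiMap α β γ bs cs bs = bs := by
    rcases lt_or_eq_of_le hbsβ with h | h
    · exact hfix bs h
    · rw [h]; rw [h] at hφβ; exact hφβ
  refine ⟨?_, ?_, ?_⟩
  · intro r _ hr
    refine ⟨hfix r hr, ?_⟩
    intro n
    induction n with
    | zero => simp
    | succ n ih => rw [Function.iterate_succ_apply', ih, hfix r hr]
  · have hev : ∀ n : ℕ, 1 ≤ n → (phiMap α β γ bs cs)^[n] β = bs := by
      intro n hn
      induction n with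
      | zero => omega
      | succ n ih =>
        rcases Nat.eq_or_lt_of_le hn with h | h
        · rw [← h]; simpa using hφβ
        · rw [Function.iterate_succ_apply', ih (by omega), hφbs]
    refine Tendsto.congr' ?_ tendsto_const_nhds
    filter_upwards [eventually_ge_atTop 1] with n hn
    exact (hev n hn).symm
  · intro r hr
    have hr0 : 0 < r := lt_trans hβ hr
    obtain ⟨c, hc1, hcα, hcr⟩ : ∃ c : ℝ, 1 < c ∧ c ≤ α ∧ c ≤ (r / β) ^ 2 := by
      refine ⟨min α ((r / β) ^ 2), ?_, min_le_left _ _, min_le_right _ _⟩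
      refine lt_min hα1 ?_
      have h1 : 1 < r / β := (one_lt_div hβ).2 hr
      nlinarith
    have hstep : ∀ s : ℝ, r ≤ s →
        r ≤ phiMap α β γ bs cs s ∧ c * s ≤ phiMap α β γ bs cs s := by
      intro s hs
      have hsβ : β < s := lt_of_lt_of_le hr hs
      have hs0 : 0 < s := lt_trans hβ hsβ
      have key : c * s ≤ phiMap α β γ bs cs s := by
        unfold phiMap
        rw [if_neg (not_lt.2 hsβ.le), if_neg hsβ.ne']
        by_cases h1 : s < γ
        · rw [if_pos h1]
          have hαγ : α / γ ^ 2 = 1 / β ^ 2 := by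
            rw [← heq]; field_simp
          rw [hαγ]
          have h2 : c ≤ r ^ 2 / β ^ 2 := by
            rw [div_pow] at hcr; exact hcr
          rw [div_mul_eq_mul_div, one_mul, le_div_iff₀ (by positivity)]
          have hcβ2 : c * β ^ 2 ≤ r ^ 2 := (le_div_iff₀ (by positivity)).mp h2
          have hr2s2 : r ^ 2 ≤ s ^ 2 := by nlinarith
          nlinarith [mul_le_mul_of_nonneg_right hcβ2 hs0.le,
            mul_le_mul_of_nonneg_right hr2s2 hs0.le]
        · rw [if_neg h1]
          by_cases h2 : s = γ
          · rw [if_pos h2, h2]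
            calc c * γ ≤ α * γ := by nlinarith
              _ ≤ cs := hcsge
          · rw [if_neg h2]
            nlinarith
      refine ⟨?_, key⟩
      calc r ≤ s := hs
        _ = 1 * s := (one_mul s).symm
        _ ≤ c * s := by nlinarith
        _ ≤ _ := key
    have hiter : ∀ n : ℕ, r ≤ (phiMap α β γ bs cs)^[n] r ∧
        c ^ n * r ≤ (phiMap α β γ bs cs)^[n] r := by
      intro n
      induction n with
      | zero => simp
      | succ n ih =>
        obtain ⟨ih1, ih2⟩ := ih
        rw [Function.iterate_succ_apply']
        obtain ⟨h1, h2⟩ := hstep _ ih1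
        refine ⟨h1, ?_⟩
        calc c ^ (n + 1) * r = c * (c ^ n * r) := by ring
          _ ≤ c * (phiMap α β γ bs cs)^[n] r :=
              mul_le_mul_of_nonneg_left ih2 (by linarith)
          _ ≤ _ := h2
    refine tendsto_atTop_mono (fun n => (hiter n).2) ?_
    exact (tendsto_pow_atTop_atTop_of_one_lt hc1).atTop_mul_const hr0
end

section
/- Let α < 1 and set H = {α^{-k}·β : k = 0,1,2,…}. If r ∈ [0,∞) and either r ∉ H, or r ∈ H and b̂ ∉ H, then the iterates φⁿ(r) converge to 0 as n → ∞. -/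
open Filter

/-- The real map describing how `f(x) = a x ((x+b)/(x+c))²` transforms the p-adic
absolute value `|x|_p` when `α = |a|_p` and `β = |b|_p = |c|_p`. -/
noncomputable def phiHatMap (α β bhat : ℝ) : ℝ → ℝ := fun r =>
  if r = β then bhat else α * r

lemma phiHat_iter_of_notMem (α β bhat : ℝ) (hα : 0 < α) (s : ℝ)
    (hs : ¬ ∃ k : ℕ, s = β / α ^ k) :
    ∀ n, (phiHatMap α β bhat)^[n] s = α ^ n * s := by
  intro n
  induction n with
  | zero => simp
  | succ n ih =>
    rw [Function.iterate_succ_apply', ih, phiHatMap]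
    have hne : α ^ n * s ≠ β := by
      intro h
      exact hs ⟨n, (eq_div_iff (pow_ne_zero n hα.ne')).mpr (by linarith [mul_comm (α ^ n) s])⟩
    simp only [hne, if_false]
    ring

lemma phiHat_iter_hits (α β bhat : ℝ) (hα : 0 < α) (hβ : 0 < β) (hα1 : α < 1) :
    ∀ k : ℕ, (phiHatMap α β bhat)^[k + 1] (β / α ^ k) = bhat := by
  intro k
  induction k with
  | zero => simp [phiHatMap]
  | succ k ih =>
    have hne : β / α ^ (k + 1) ≠ β := by
      have h1 : α ^ (k + 1) < 1 := pow_lt_one₀ hα.le hα1 (Nat.succ_ne_zero k)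
      have : β < β / α ^ (k + 1) := by
        rw [lt_div_iff₀ (pow_pos hα _)]
        nlinarith [pow_pos hα (k + 1)]
      exact (ne_of_gt this)
    rw [Function.iterate_succ_apply]
    have hstep : phiHatMap α β bhat (β / α ^ (k + 1)) = β / α ^ k := by
      simp only [phiHatMap, hne, if_false]
      field_simp
      ring
    rw [hstep, ih]

theorem phiHat_tendsto_zero_of_alpha_lt_one
    (α β bhat : ℝ) (hα : 0 < α) (hβ : 0 < β) (hbhat : 0 < bhat)
    (hα1 : α < 1) (r : ℝ) (hr : 0 ≤ r)
    (hrH : (¬ ∃ k : ℕ, r = β / α ^ k) ∨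
      ((∃ k : ℕ, r = β / α ^ k) ∧ ¬ ∃ k : ℕ, bhat = β / α ^ k)) :
    Tendsto (fun n => (phiHatMap α β bhat)^[n] r) atTop (nhds 0) := by
  have hpow : Tendsto (fun n : ℕ => α ^ n) atTop (nhds 0) :=
    tendsto_pow_atTop_nhds_zero_of_lt_one hα.le hα1
  rcases hrH with hr' | ⟨⟨k, hk⟩, hb⟩
  · have := hpow.mul_const r
    rw [zero_mul] at this
    exact this.congr fun n => (phiHat_iter_of_notMem α β bhat hα r hr' n).symm
  · rw [← tendsto_add_atTop_iff_nat (k + 1)]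
    have key : ∀ n, (phiHatMap α β bhat)^[n + (k + 1)] r = α ^ n * bhat := by
      intro n
      rw [Function.iterate_add_apply, hk, phiHat_iter_hits α β bhat hα hβ hα1 k,
        phiHat_iter_of_notMem α β bhat hα bhat hb n]
    have := hpow.mul_const bhat
    rw [zero_mul] at this
    exact this.congr fun n => (key n).symm
end

section
/- Let α > 1 and set H = {α^{-k}·β : k = 0,1,2,…}. If r > 0 and either r ∉ H, or r ∈ H and b̂ ∉ H, then the iterates φⁿ(r) tend to +∞ as n → ∞. -/
open Filter

lemma phiHat_iterate_eq_pow_mul (α β bhat : ℝ) (hα : 0 < α) (r : ℝ)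
    (h : ∀ k : ℕ, r ≠ β / α ^ k) :
    ∀ n : ℕ, (phiHatMap α β bhat)^[n] r = α ^ n * r := by
  intro n
  induction n with
  | zero => simp
  | succ n ih =>
    rw [Function.iterate_succ_apply', ih, phiHatMap]
    have hne : α ^ n * r ≠ β := by
      intro hc
      exact h n (by field_simp [pow_ne_zero n hα.ne'] at hc ⊢; linarith [hc])
    simp only [hne, if_false]
    ring

lemma phiHat_tendsto_aux (α β bhat : ℝ) (hα : 0 < α) (hα1 : 1 < α) (r : ℝ) (hr : 0 < r)
    (h : ∀ k : ℕ, r ≠ β / α ^ k) :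
    Tendsto (fun n => (phiHatMap α β bhat)^[n] r) atTop atTop := by
  have := (tendsto_pow_atTop_atTop_of_one_lt hα1).atTop_mul_const hr
  refine this.congr fun n => ?_
  exact (phiHat_iterate_eq_pow_mul α β bhat hα r h n).symm

lemma phiHat_iterate_hits (α β bhat : ℝ) (hα : 0 < α) (hα1 : 1 < α) (hβ : 0 < β) :
    ∀ k : ℕ, (phiHatMap α β bhat)^[k] (β / α ^ k) = β := by
  intro k
  induction k with
  | zero => simp
  | succ k ih =>
    rw [Function.iterate_succ_apply, phiHatMap]
    have hne : β / α ^ (k + 1) ≠ β := by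
      intro hc
      have hpow : (1:ℝ) < α ^ (k + 1) := one_lt_pow₀ hα1 (Nat.succ_ne_zero k)
      have : β < β := by
        calc β = β / α ^ (k+1) * α ^ (k+1) := by
              field_simp
          _ > β / α ^ (k+1) * 1 := by
              apply mul_lt_mul_of_pos_left hpow
              rw [hc]; exact hβ
          _ = β := by rw [hc]; ring
      exact lt_irrefl _ this
    simp only [hne, if_false]
    have : α * (β / α ^ (k + 1)) = β / α ^ k := by
      field_simp; ring
    rw [this, ih]

theorem phiHat_tendsto_atTop_of_alpha_gt_one
    (α β bhat : ℝ) (hα : 0 < α) (hβ : 0 < β) (hbhat : 0 < bhat)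
    (hα1 : 1 < α) (r : ℝ) (hr : 0 < r)
    (hrH : (¬ ∃ k : ℕ, r = β / α ^ k) ∨
      ((∃ k : ℕ, r = β / α ^ k) ∧ ¬ ∃ k : ℕ, bhat = β / α ^ k)) :
    Tendsto (fun n => (phiHatMap α β bhat)^[n] r) atTop atTop := by
  rcases hrH with h | ⟨⟨k, hk⟩, hb⟩
  · push_neg at h
    exact phiHat_tendsto_aux α β bhat hα hα1 r hr h
  · push_neg at hb
    have hkβ : (phiHatMap α β bhat)^[k] r = β := by
      rw [hk]; exact phiHat_iterate_hits α β bhat hα hα1 hβ k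
    have hk1 : (phiHatMap α β bhat)^[k + 1] r = bhat := by
      rw [Function.iterate_succ_apply', hkβ, phiHatMap]
      simp
    have hb' : Tendsto (fun n => (phiHatMap α β bhat)^[n] bhat) atTop atTop :=
      phiHat_tendsto_aux α β bhat hα hα1 bhat hbhat hb
    rw [← tendsto_add_atTop_iff_nat (k + 1)]
    refine hb'.congr fun n => ?_
    rw [Function.iterate_add_apply, hk1]
end

section
/- Let α < 1 and αβ² < γ². Then for every r ∈ [0, β) with r ≠ γ, the iterates ψⁿ(r) converge to 0 as n → ∞. -/
open Filter

/-- The real map describing how `f(x) = a x ((x+b)/(x+c))²` transforms the p-adic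
absolute value `|x|_p` when `α = |a|_p`, `β = |b|_p`, `γ = |c|_p` and `γ < β`. -/
noncomputable def psiMap (α β γ bp cp : ℝ) : ℝ → ℝ := fun r =>
  if r < γ then α * β ^ 2 / γ ^ 2 * r
  else if r = γ then cp
  else if r < β then α * β ^ 2 / r
  else if r = β then bp
  else α * r

lemma psi_tendsto_small
    (α β γ bp cp : ℝ) (hα : 0 < α) (hβ : 0 < β) (hγ : 0 < γ)
    (hlt : α * β ^ 2 < γ ^ 2)
    (s : ℝ) (hs0 : 0 ≤ s) (hsγ : s < γ) :
    Tendsto (fun n => (psiMap α β γ bp cp)^[n] s) atTop (nhds 0) := by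
  set k : ℝ := α * β ^ 2 / γ ^ 2 with hk
  have hk0 : 0 < k := div_pos (by positivity) (by positivity)
  have hk1 : k < 1 := (div_lt_one (by positivity)).mpr hlt
  have hform : ∀ n, (psiMap α β γ bp cp)^[n] s = k ^ n * s := by
    intro n
    induction n with
    | zero => simp
    | succ n ih =>
      have hle : k ^ n * s < γ := by
        calc k ^ n * s ≤ 1 * s := by
              apply mul_le_mul_of_nonneg_right _ hs0
              exact pow_le_one₀ hk0.le hk1.le
          _ = s := one_mul s
          _ < γ := hsγ
      rw [Function.iterate_succ_apply', ih, psiMap, if_pos hle]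
      ring
  simp only [hform]
  have : Tendsto (fun n : ℕ => k ^ n * s) atTop (nhds (0 * s)) :=
    (tendsto_pow_atTop_nhds_zero_of_lt_one hk0.le hk1).mul_const s
  simpa using this

theorem psi_tendsto_zero_of_alpha_lt_one_lt
    (α β γ bp cp : ℝ) (hα : 0 < α) (hβ : 0 < β) (hγ : 0 < γ)
    (hbp : 0 < bp) (hcp : 0 < cp) (hγβ : γ < β)
    (hbple : bp ≤ α * β) (hcpge : α * β ^ 2 / γ ≤ cp)
    (hα1 : α < 1) (hlt : α * β ^ 2 < γ ^ 2)
    (r : ℝ) (hr0 : 0 ≤ r) (hrβ : r < β) (hrγ : r ≠ γ) :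
    Tendsto (fun n => (psiMap α β γ bp cp)^[n] r) atTop (nhds 0) := by
  rcases lt_or_gt_of_ne hrγ with h | h
  · exact psi_tendsto_small α β γ bp cp hα hβ hγ hlt r hr0 h
  · -- γ < r < β : one step lands below γ
    have hr : 0 < r := hγ.trans h
    have hstep : psiMap α β γ bp cp r = α * β ^ 2 / r := by
      rw [psiMap]
      rw [if_neg (not_lt.mpr h.le), if_neg hrγ, if_pos hrβ]
    set s : ℝ := α * β ^ 2 / r with hs
    have hs0 : 0 ≤ s := by positivity
    have hsγ : s < γ := by
      have h1 : s < α * β ^ 2 / γ := by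
        apply div_lt_div_of_pos_left (by positivity) hγ h
      have h2 : α * β ^ 2 / γ < γ := by
        rw [div_lt_iff₀ hγ]
        nlinarith
      exact h1.trans h2
    have htail := psi_tendsto_small α β γ bp cp hα hβ hγ hlt s hs0 hsγ
    have heq : ∀ n, (psiMap α β γ bp cp)^[n] s = (psiMap α β γ bp cp)^[n + 1] r := by
      intro n
      rw [Function.iterate_succ_apply, hstep]
    rw [← tendsto_add_atTop_iff_nat 1]
    simpa only [heq] using htail
end

section
/- Let α < 1 and αβ² > γ². Then max(γ, αβ) < β√α < min(β, αβ²/γ), and for every r with max(γ, αβ) < r < min(β, αβ²/γ) one has ψ(ψ(r)) = r. In particular, ψ² fixes every point of an open interval around β√α, so each such radius belongs to a 2-cycle of ψ (with fixed point β√α). -/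
open Filter

theorem psi_two_cycles_of_alpha_lt_one_gt
    (α β γ bp cp : ℝ) (hα : 0 < α) (hβ : 0 < β) (hγ : 0 < γ)
    (hbp : 0 < bp) (hcp : 0 < cp) (hγβ : γ < β)
    (hbple : bp ≤ α * β) (hcpge : α * β ^ 2 / γ ≤ cp)
    (hα1 : α < 1) (hgt : γ ^ 2 < α * β ^ 2) :
    (max γ (α * β) < β * Real.sqrt α ∧ β * Real.sqrt α < min β (α * β ^ 2 / γ)) ∧
    ∀ r : ℝ, max γ (α * β) < r → r < min β (α * β ^ 2 / γ) →
      psiMap α β γ bp cp (psiMap α β γ bp cp r) = r := by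
  have hsq : Real.sqrt α ^ 2 = α := Real.sq_sqrt hα.le
  have hs0 : 0 < Real.sqrt α := Real.sqrt_pos.mpr hα
  have hs1 : Real.sqrt α < 1 := by
    nlinarith [Real.sqrt_nonneg α]
  have hαs : α < Real.sqrt α := by nlinarith
  have hγlt : γ < β * Real.sqrt α := by nlinarith [mul_pos hβ hs0]
  have hαβlt : α * β < β * Real.sqrt α := by nlinarith
  have hltβ : β * Real.sqrt α < β := by nlinarith
  have hltc : β * Real.sqrt α < α * β ^ 2 / γ := by
    rw [lt_div_iff₀ hγ]; nlinarith
  refine ⟨⟨max_lt hγlt hαβlt, lt_min hltβ hltc⟩, ?_⟩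
  intro r h1 h2
  have hγr : γ < r := lt_of_le_of_lt (le_max_left _ _) h1
  have hαβr : α * β < r := lt_of_le_of_lt (le_max_right _ _) h1
  have hrβ : r < β := lt_of_lt_of_le h2 (min_le_left _ _)
  have hrc : r < α * β ^ 2 / γ := lt_of_lt_of_le h2 (min_le_right _ _)
  have hr0 : 0 < r := hγ.trans hγr
  have step1 : psiMap α β γ bp cp r = α * β ^ 2 / r := by
    simp only [psiMap, if_neg (not_lt.mpr hγr.le), if_neg hγr.ne', if_pos hrβ]
  have hs : α * β ^ 2 / r = α * β ^ 2 / r := rfl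
  set s := α * β ^ 2 / r with hsdef
  have hsγ : γ < s := by
    rw [hsdef, lt_div_iff₀ hr0]
    have := (lt_div_iff₀ hγ).mp hrc
    nlinarith
  have hsβ : s < β := by
    rw [hsdef, div_lt_iff₀ hr0]; nlinarith
  have step2 : psiMap α β γ bp cp s = α * β ^ 2 / s := by
    simp only [psiMap, if_neg (not_lt.mpr hsγ.le), if_neg hsγ.ne', if_pos hsβ]
  rw [step1, step2, hsdef]
  field_simp
end

section
/- Let α = 1 and set L = {β·(γ²/β²)^k : k = 0,1,2,…}. If r ∈ [0,∞) and r ∉ L, then the orbit of r is eventually constant: there exists an integer k ≥ 0 such that ψⁿ(r) = ψ^k(r) for every n ≥ k. -/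
open Filter

theorem psi_eventually_constant_of_alpha_eq_one
    (α β γ bp cp : ℝ) (hα : 0 < α) (hβ : 0 < β) (hγ : 0 < γ)
    (hbp : 0 < bp) (hcp : 0 < cp) (hγβ : γ < β)
    (hbple : bp ≤ α * β) (hcpge : α * β ^ 2 / γ ≤ cp)
    (hα1 : α = 1) (r : ℝ) (hr : 0 ≤ r)
    (hrL : ¬ ∃ k : ℕ, r = β * (γ ^ 2 / β ^ 2) ^ k) :
    ∃ k : ℕ, ∀ n : ℕ, k ≤ n →
      (psiMap α β γ bp cp)^[n] r = (psiMap α β γ bp cp)^[k] r := by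
  subst hα1
  rw [one_mul] at hbple hcpge
  set ψ := psiMap 1 β γ bp cp with hψdef
  -- basic computation lemmas
  have hψlt : ∀ s : ℝ, s < γ → ψ s = β ^ 2 / γ ^ 2 * s := by
    intro s hs
    simp only [hψdef, psiMap, if_pos hs]; ring
  have hψγ : ψ γ = cp := by
    simp [hψdef, psiMap]
  have hψmid : ∀ s : ℝ, γ < s → s < β → ψ s = β ^ 2 / s := by
    intro s h1 h2
    simp only [hψdef, psiMap, if_neg (not_lt.mpr h1.le), if_neg (ne_of_gt h1),
      if_pos h2]; ring
  have hfix : ∀ s : ℝ, s = 0 ∨ β < s → ψ s = s := by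
    intro s hs
    rcases hs with hs | hs
    · subst hs
      simp only [hψdef, psiMap, if_pos hγ]; ring
    · simp only [hψdef, psiMap, if_neg (not_lt.mpr (by linarith : γ ≤ s)),
        if_neg (by intro h; linarith : ¬ s = γ), if_neg (not_lt.mpr hs.le),
        if_neg (ne_of_gt hs)]; ring
  -- it suffices to reach 0 or a point > β
  suffices h : ∃ k : ℕ, ψ^[k] r = 0 ∨ β < ψ^[k] r by
    obtain ⟨k, hk⟩ := h
    refine ⟨k, fun n hn => ?_⟩
    induction n, hn using Nat.le_induction with
    | base => rfl
    | succ n hn ih =>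
      rw [Function.iterate_succ_apply', ih, hfix _ hk]
  have hcpβ : β < cp := by
    have : β < β ^ 2 / γ := by
      rw [lt_div_iff₀ hγ]; nlinarith
    linarith
  rcases eq_or_lt_of_le hr with hr0 | hr0
  · exact ⟨0, Or.inl hr0.symm⟩
  rcases lt_trichotomy r β with hrβ | hrβ | hrβ
  · rcases lt_trichotomy r γ with hrγ | hrγ | hrγ
    · -- the growth case : r < γ
      have hq1 : (1 : ℝ) < β ^ 2 / γ ^ 2 := by
        rw [lt_div_iff₀ (by positivity)]; nlinarith
      have hex : ∃ m : ℕ, γ ≤ r * (β ^ 2 / γ ^ 2) ^ m := by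
        obtain ⟨m, hm⟩ := pow_unbounded_of_one_lt (γ / r) hq1
        exact ⟨m, by rw [div_lt_iff₀ hr0, mul_comm] at hm; linarith⟩
      set m := Nat.find hex with hmdef
      have hsγ : γ ≤ r * (β ^ 2 / γ ^ 2) ^ m := Nat.find_spec hex
      have hmin : ∀ j : ℕ, j < m → r * (β ^ 2 / γ ^ 2) ^ j < γ := fun j hj =>
        lt_of_not_ge (Nat.find_min hex hj)
      have hiter : ∀ j : ℕ, j ≤ m → ψ^[j] r = r * (β ^ 2 / γ ^ 2) ^ j := by
        intro j hj
        induction j with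
        | zero => simp
        | succ j ih =>
          rw [Function.iterate_succ_apply', ih (by omega),
            hψlt _ (hmin j (by omega))]
          ring
      set s := r * (β ^ 2 / γ ^ 2) ^ m with hsdef
      have hψm : ψ^[m] r = s := hiter m le_rfl
      rcases eq_or_lt_of_le hsγ with hsγ' | hsγ'
      · -- s = γ
        refine ⟨m + 1, Or.inr ?_⟩
        rw [Function.iterate_succ_apply', hψm, ← hsγ', hψγ]
        exact hcpβ
      rcases lt_trichotomy s β with hsβ | hsβ | hsβ
      · -- γ < s < β : one more step lands above β
        refine ⟨m + 1, Or.inr ?_⟩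
        rw [Function.iterate_succ_apply', hψm, hψmid s hsγ' hsβ]
        rw [lt_div_iff₀ (by linarith : (0:ℝ) < s)]; nlinarith
      · -- s = β : contradicts r ∉ L
        exfalso
        apply hrL
        refine ⟨m, ?_⟩
        have hne : ((β ^ 2 / γ ^ 2) ^ m) ≠ 0 := by positivity
        have h1 : (γ ^ 2 / β ^ 2) ^ m = ((β ^ 2 / γ ^ 2) ^ m)⁻¹ := by
          rw [← inv_pow, inv_div]
        rw [h1, eq_comm, mul_inv_eq_iff_eq_mul₀ hne, eq_comm, mul_comm]
        linarith [hsβ]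
      · exact ⟨m, Or.inr (by rw [hψm]; exact hsβ)⟩
    · -- r = γ
      refine ⟨1, Or.inr ?_⟩
      rw [Function.iterate_one, hrγ, hψγ]
      exact hcpβ
    · -- γ < r < β
      refine ⟨1, Or.inr ?_⟩
      rw [Function.iterate_one, hψmid r hrγ hrβ]
      rw [lt_div_iff₀ hr0]; nlinarith
  · exact absurd ⟨0, by simp [hrβ]⟩ hrL
  · exact ⟨0, Or.inr hrβ⟩
end

section
/- Let α > 1 and set L = {β·(γ²/(αβ²))^k : k = 0,1,2,…}. If r > 0 and either r ∉ L, or r ∈ L and b′ ∉ L, then the iterates ψⁿ(r) tend to +∞ as n → ∞. -/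
open Filter

section Aux

variable {α β γ bp cp : ℝ}

lemma psi_of_lt {r : ℝ} (h : r < γ) : psiMap α β γ bp cp r = α * β ^ 2 / γ ^ 2 * r := by
  simp [psiMap, h]

lemma psi_gamma : psiMap α β γ bp cp γ = cp := by
  simp [psiMap]

lemma psi_of_mid {r : ℝ} (h1 : γ < r) (h2 : r < β) : psiMap α β γ bp cp r = α * β ^ 2 / r := by
  simp [psiMap, h1.ne', not_lt.mpr h1.le, h2]

lemma psi_beta (hγβ : γ < β) : psiMap α β γ bp cp β = bp := by
  simp [psiMap, hγβ.ne', not_lt.mpr hγβ.le]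

lemma psi_of_gt {r : ℝ} (hγβ : γ < β) (h : β < r) : psiMap α β γ bp cp r = α * r := by
  have h1 := hγβ.trans h
  simp [psiMap, h1.ne', not_lt.mpr h1.le, h.ne', not_lt.mpr h.le]

lemma iter_of_gt (hβ : 0 < β) (hα1 : 1 < α) (hγβ : γ < β) {s : ℝ} (hs : β < s) :
    ∀ n, (psiMap α β γ bp cp)^[n] s = α ^ n * s := by
  intro n
  induction n with
  | zero => simp
  | succ n ih =>
    have h1 : β < α ^ n * s :=
      lt_of_lt_of_le hs (le_mul_of_one_le_left (hβ.trans hs).le (one_le_pow₀ hα1.le))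
    rw [Function.iterate_succ_apply', ih, psi_of_gt hγβ h1, pow_succ]
    ring

lemma psi_escape (hβ : 0 < β) (hα1 : 1 < α) (hγβ : γ < β) {s : ℝ} (m : ℕ)
    (hm : β < (psiMap α β γ bp cp)^[m] s) :
    Tendsto (fun n => (psiMap α β γ bp cp)^[n] s) atTop atTop := by
  rw [← tendsto_add_atTop_iff_nat m]
  have key : ∀ n, (psiMap α β γ bp cp)^[n + m] s
      = α ^ n * (psiMap α β γ bp cp)^[m] s := by
    intro n
    rw [Function.iterate_add_apply]
    exact iter_of_gt hβ hα1 hγβ hm n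
  simp only [key]
  exact (tendsto_pow_atTop_atTop_of_one_lt hα1).atTop_mul_const (hβ.trans hm)

lemma iter_below {s : ℝ} :
    ∀ n : ℕ, (∀ j < n, s * (α * β ^ 2 / γ ^ 2) ^ j < γ) →
      (psiMap α β γ bp cp)^[n] s = s * (α * β ^ 2 / γ ^ 2) ^ n := by
  intro n
  induction n with
  | zero => simp
  | succ n ih =>
    intro h
    rw [Function.iterate_succ_apply', ih (fun j hj => h j (hj.trans (Nat.lt_succ_self n))),
      psi_of_lt (h n (Nat.lt_succ_self n)), pow_succ]
    ring

lemma escape_exists (hα : 0 < α) (hβ : 0 < β) (hγ : 0 < γ) (hcp : 0 < cp)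
    (hγβ : γ < β) (hcpge : α * β ^ 2 / γ ≤ cp) (hα1 : 1 < α)
    {s : ℝ} (hs : 0 < s) (hL : ∀ k : ℕ, s * (α * β ^ 2 / γ ^ 2) ^ k ≠ β) :
    ∃ m, β < (psiMap α β γ bp cp)^[m] s := by
  set lam : ℝ := α * β ^ 2 / γ ^ 2 with hlam
  have hγ2 : (0:ℝ) < γ ^ 2 := pow_pos hγ 2
  have hlam1 : 1 < lam := by
    rw [hlam, lt_div_iff₀ hγ2]
    nlinarith
  have hβcp : β < cp := by
    have h1 : α * β < α * β ^ 2 / γ := by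
      rw [lt_div_iff₀ hγ]
      nlinarith [mul_pos (mul_pos hα hβ) (sub_pos.mpr hγβ)]
    nlinarith
  -- the one-step-from-middle fact
  have mid_jump : ∀ t : ℝ, γ < t → t < β → β < α * β ^ 2 / t := by
    intro t h1 h2
    rw [lt_div_iff₀ (hγ.trans h1)]
    nlinarith
  rcases lt_trichotomy s γ with h | h | h
  · -- s < γ : multiply by lam until reaching γ
    have hex : ∃ n : ℕ, γ ≤ s * lam ^ n := by
      obtain ⟨n, hn⟩ := pow_unbounded_of_one_lt (γ / s) hlam1
      exact ⟨n, by rw [div_lt_iff₀ hs] at hn; linarith [hn]⟩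
    set n := Nat.find hex with hn
    have hnγ : γ ≤ s * lam ^ n := Nat.find_spec hex
    have hmin : ∀ j < n, s * lam ^ j < γ := fun j hj => not_le.mp (Nat.find_min hex hj)
    have hiter : (psiMap α β γ bp cp)^[n] s = s * lam ^ n := iter_below n hmin
    set t := s * lam ^ n with ht
    have htpos : 0 < t := mul_pos hs (pow_pos (lt_trans one_pos hlam1) n)
    rcases eq_or_lt_of_le hnγ with heq | hlt
    · -- t = γ
      refine ⟨n + 1, ?_⟩
      rw [Function.iterate_succ_apply', hiter, ← heq, psi_gamma]
      exact hβcp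
    · rcases lt_trichotomy t β with h2 | h2 | h2
      · refine ⟨n + 1, ?_⟩
        rw [Function.iterate_succ_apply', hiter, psi_of_mid hlt h2]
        exact mid_jump t hlt h2
      · exact absurd h2 (hL n)
      · exact ⟨n, by rw [hiter]; exact h2⟩
  · -- s = γ
    refine ⟨1, ?_⟩
    rw [Function.iterate_one, h, psi_gamma]
    exact hβcp
  · rcases lt_trichotomy s β with h2 | h2 | h2
    · refine ⟨1, ?_⟩
      rw [Function.iterate_one, psi_of_mid h h2]
      exact mid_jump s h h2
    · exact absurd (by simpa using h2) (hL 0)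
    · exact ⟨0, h2⟩

end Aux

theorem psi_tendsto_atTop_of_alpha_gt_one
    (α β γ bp cp : ℝ) (hα : 0 < α) (hβ : 0 < β) (hγ : 0 < γ)
    (hbp : 0 < bp) (hcp : 0 < cp) (hγβ : γ < β)
    (hbple : bp ≤ α * β) (hcpge : α * β ^ 2 / γ ≤ cp)
    (hα1 : 1 < α) (r : ℝ) (hr : 0 < r)
    (hrL : (¬ ∃ k : ℕ, r = β * (γ ^ 2 / (α * β ^ 2)) ^ k) ∨
      ((∃ k : ℕ, r = β * (γ ^ 2 / (α * β ^ 2)) ^ k) ∧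
        ¬ ∃ k : ℕ, bp = β * (γ ^ 2 / (α * β ^ 2)) ^ k)) :
    Tendsto (fun n => (psiMap α β γ bp cp)^[n] r) atTop atTop := by
  set lam : ℝ := α * β ^ 2 / γ ^ 2 with hlam
  set mu : ℝ := γ ^ 2 / (α * β ^ 2) with hmu
  have hγ2 : (0:ℝ) < γ ^ 2 := pow_pos hγ 2
  have hαβ2 : (0:ℝ) < α * β ^ 2 := by positivity
  have hmul : mu * lam = 1 := by
    rw [hmu, hlam]
    field_simp
  have hlam1 : 1 < lam := by
    rw [hlam, lt_div_iff₀ hγ2]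
    nlinarith
  have hiff : ∀ (s : ℝ) (k : ℕ), s = β * mu ^ k ↔ s * lam ^ k = β := by
    intro s k
    have h1 : mu ^ k * lam ^ k = 1 := by rw [← mul_pow, hmul, one_pow]
    constructor
    · rintro rfl
      rw [mul_assoc, h1, mul_one]
    · intro h
      calc s = s * (lam ^ k * mu ^ k) := by rw [mul_comm (lam ^ k), h1, mul_one]
        _ = s * lam ^ k * mu ^ k := by ring
        _ = β * mu ^ k := by rw [h]
  rcases hrL with h | ⟨⟨k, hk⟩, hb⟩
  · have hL : ∀ k : ℕ, r * lam ^ k ≠ β := fun k hk => h ⟨k, (hiff r k).mpr hk⟩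
    obtain ⟨m, hm⟩ := escape_exists (bp := bp) hα hβ hγ hcp hγβ hcpge hα1 hr hL
    exact psi_escape hβ hα1 hγβ m hm
  · have hrk : r * lam ^ k = β := (hiff r k).mp hk
    have hbgl : β / γ < lam := by
      rw [hlam, div_lt_div_iff₀ hγ hγ2]
      nlinarith [mul_pos (mul_pos hβ hγ) (sub_pos.mpr hγβ),
        mul_pos (mul_pos (mul_pos hβ hβ) hγ) (sub_pos.mpr hα1)]
    have hjlt : ∀ j < k, r * lam ^ j < γ := by
      intro j hj
      have h2 : r * lam ^ j * lam ^ (k - j) = β := by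
        rw [mul_assoc, ← pow_add, Nat.add_sub_cancel' hj.le, hrk]
      have h3 : lam ≤ lam ^ (k - j) :=
        le_self_pow₀ hlam1.le (Nat.sub_ne_zero_of_lt hj)
      have hLgt : β / γ < lam ^ (k - j) := lt_of_lt_of_le hbgl h3
      have hLpos : (0:ℝ) < lam ^ (k - j) := pow_pos (lt_trans one_pos hlam1) _
      have hx : r * lam ^ j = β / lam ^ (k - j) :=
        eq_div_of_mul_eq hLpos.ne' h2
      rw [hx]
      calc β / lam ^ (k - j) < β / (β / γ) :=
            div_lt_div_of_pos_left hβ (div_pos hβ hγ) hLgt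
        _ = γ := by field_simp
    have hiterk : (psiMap α β γ bp cp)^[k] r = β := by
      rw [iter_below k hjlt, hrk]
    have hiterk1 : (psiMap α β γ bp cp)^[k + 1] r = bp := by
      rw [Function.iterate_succ_apply', hiterk, psi_beta hγβ]
    have hLb : ∀ j : ℕ, bp * lam ^ j ≠ β := fun j hj => hb ⟨j, (hiff bp j).mpr hj⟩
    obtain ⟨m, hm⟩ := escape_exists (bp := bp) hα hβ hγ hcp hγβ hcpge hα1 hbp hLb
    refine psi_escape hβ hα1 hγβ (m + (k + 1)) ?_
    rw [Function.iterate_add_apply, hiterk1]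
    exact hm
end

section
/- Suppose |b|_p > |c|_p and let x ∈ ℚ_p with x ≠ −c. Then: (i) if |x|_p < |c|_p then |f(x)|_p = (|a|_p·|b|_p²/|c|_p²)·|x|_p; (ii) if |c|_p < |x|_p < |b|_p then |f(x)|_p = |a|_p·|b|_p²/|x|_p; (iii) if |x|_p > |b|_p then |f(x)|_p = |a|_p·|x|_p. -/
/-! In each regime one summand of `x + b` and one of `x + c` has strictly larger norm, and the
ultrametric inequality then forces the norm of the sum to be that of the larger summand, so
`‖f x‖ = ‖a‖ ‖x‖ (‖x + b‖ / ‖x + c‖)²` becomes a monomial in `‖a‖, ‖b‖, ‖c‖, ‖x‖`. -/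

/-- The (3,2)-rational map `f(x) = a·x·((x+b)/(x+c))²` over the p-adic numbers. -/
noncomputable def padicF {p : ℕ} [Fact p.Prime] (a b c : ℚ_[p]) : ℚ_[p] → ℚ_[p] :=
  fun x => a * x * ((x + b) / (x + c)) ^ 2

namespace IsUltrametricDist

variable {E : Type*} [SeminormedAddGroup E] [IsUltrametricDist E] {x y : E}

theorem norm_add_eq_left_of_norm_lt (h : ‖y‖ < ‖x‖) : ‖x + y‖ = ‖x‖ := by
  rw [norm_add_eq_max_of_norm_ne_norm h.ne', max_eq_left h.le]

theorem norm_add_eq_right_of_norm_lt (h : ‖x‖ < ‖y‖) : ‖x + y‖ = ‖y‖ := by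
  rw [norm_add_eq_max_of_norm_ne_norm h.ne, max_eq_right h.le]

end IsUltrametricDist

open IsUltrametricDist

theorem norm_padicF {p : ℕ} [Fact p.Prime] (a b c x : ℚ_[p]) :
    ‖padicF a b c x‖ = ‖a‖ * ‖x‖ * (‖x + b‖ / ‖x + c‖) ^ 2 := by
  simp only [padicF, norm_mul, norm_pow, norm_div]

theorem norm_padicF_of_norm_c_lt_norm_b_general {p : ℕ} [Fact p.Prime] (a b c : ℚ_[p])
    (hcb : ‖c‖ < ‖b‖) (x : ℚ_[p]) :
    (‖x‖ < ‖c‖ → ‖padicF a b c x‖ = ‖a‖ * ‖b‖ ^ 2 / ‖c‖ ^ 2 * ‖x‖) ∧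
    (‖c‖ < ‖x‖ → ‖x‖ < ‖b‖ → ‖padicF a b c x‖ = ‖a‖ * ‖b‖ ^ 2 / ‖x‖) ∧
    (‖b‖ < ‖x‖ → ‖padicF a b c x‖ = ‖a‖ * ‖x‖) := by
  refine ⟨fun hxc => ?_, fun hcx hxb => ?_, fun hbx => ?_⟩
  · have hc : ‖c‖ ≠ 0 := ((norm_nonneg x).trans_lt hxc).ne'
    rw [norm_padicF, norm_add_eq_right_of_norm_lt (hxc.trans hcb),
      norm_add_eq_right_of_norm_lt hxc]
    field_simp
  · have hx : ‖x‖ ≠ 0 := ((norm_nonneg c).trans_lt hcx).ne'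
    rw [norm_padicF, norm_add_eq_right_of_norm_lt hxb, norm_add_eq_left_of_norm_lt hcx]
    field_simp
  · have hx : ‖x‖ ≠ 0 := ((norm_nonneg b).trans_lt hbx).ne'
    rw [norm_padicF, norm_add_eq_left_of_norm_lt hbx, norm_add_eq_left_of_norm_lt (hcb.trans hbx),
      div_self hx, one_pow, mul_one]

theorem norm_padicF_of_norm_c_lt_norm_b {p : ℕ} [Fact p.Prime] (a b c : ℚ_[p])
    (habc : a * (a - 1) * (b - c) * (a * b ^ 2 - c ^ 2) ≠ 0)
    (hcb : ‖c‖ < ‖b‖) (x : ℚ_[p]) (hx : x ≠ -c) :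
    (‖x‖ < ‖c‖ → ‖padicF a b c x‖ = ‖a‖ * ‖b‖ ^ 2 / ‖c‖ ^ 2 * ‖x‖) ∧
    (‖c‖ < ‖x‖ → ‖x‖ < ‖b‖ → ‖padicF a b c x‖ = ‖a‖ * ‖b‖ ^ 2 / ‖x‖) ∧
    (‖b‖ < ‖x‖ → ‖padicF a b c x‖ = ‖a‖ * ‖x‖) :=
  norm_padicF_of_norm_c_lt_norm_b_general a b c hcb x
end

section
/- Suppose |b|_p < |c|_p and |a|_p = 1. Then: (i) for every x ∈ ℚ_p with |x|_p < |c|_p, the iterates fⁿ(x) are defined for all n (the orbit never meets −c) and fⁿ(x) → 0 as n → ∞; in particular the open ball U_{|c|_p}(0) is contained in the basin of attraction of the fixed point 0. (ii) For every x with |x|_p > |c|_p, the iterates fⁿ(x) are defined for all n and |fⁿ(x)|_p = |x|_p for all n, i.e. every sphere of radius r > |c|_p centered at 0 is invariant under f. -/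
open Filter

theorem padicF_dynamics_norm_b_lt_norm_c_norm_a_eq_one {p : ℕ} [Fact p.Prime]
    (a b c : ℚ_[p])
    (habc : a * (a - 1) * (b - c) * (a * b ^ 2 - c ^ 2) ≠ 0)
    (hbc : ‖b‖ < ‖c‖) (ha : ‖a‖ = 1) :
    (∀ x : ℚ_[p], ‖x‖ < ‖c‖ →
      (∀ n : ℕ, (padicF a b c)^[n] x ≠ -c) ∧
      Tendsto (fun n => (padicF a b c)^[n] x) atTop (nhds 0)) ∧
    (∀ x : ℚ_[p], ‖c‖ < ‖x‖ →
      (∀ n : ℕ, (padicF a b c)^[n] x ≠ -c) ∧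
      ∀ n : ℕ, ‖(padicF a b c)^[n] x‖ = ‖x‖) := by
  have hc : (0:ℝ) < ‖c‖ := lt_of_le_of_lt (norm_nonneg b) hbc
  -- contraction estimate inside the ball
  have key1 : ∀ x : ℚ_[p], ‖x‖ < ‖c‖ →
      ‖padicF a b c x‖ ≤ ‖x‖ * (max ‖x‖ ‖b‖ / ‖c‖) ^ 2 := by
    intro x hx
    have hxc : ‖x + c‖ = ‖c‖ := by
      rw [Padic.add_eq_max_of_ne (ne_of_lt hx)]
      exact max_eq_right hx.le
    have hxb : ‖x + b‖ ≤ max ‖x‖ ‖b‖ := Padic.nonarchimedean x b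
    have hnorm : ‖padicF a b c x‖ = ‖x‖ * (‖x + b‖ / ‖c‖) ^ 2 := by
      simp only [padicF, norm_mul, norm_div, norm_pow, ha, hxc]
      ring
    rw [hnorm]
    gcongr
  -- norm preservation outside the ball
  have key2 : ∀ x : ℚ_[p], ‖c‖ < ‖x‖ → ‖padicF a b c x‖ = ‖x‖ := by
    intro x hx
    have hx0 : (0:ℝ) < ‖x‖ := lt_trans hc hx
    have hxc : ‖x + c‖ = ‖x‖ := by
      rw [Padic.add_eq_max_of_ne (ne_of_gt hx)]
      exact max_eq_left hx.le
    have hxb : ‖x + b‖ = ‖x‖ := by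
      rw [Padic.add_eq_max_of_ne (ne_of_gt (lt_trans hbc hx))]
      exact max_eq_left (le_of_lt (lt_trans hbc hx))
    simp only [padicF, norm_mul, norm_div, norm_pow, ha, hxc, hxb]
    field_simp
  constructor
  · -- inside the ball
    intro x hx
    set M : ℝ := max ‖x‖ ‖b‖ with hM
    have hMc : M < ‖c‖ := max_lt hx hbc
    have hM0 : 0 ≤ M := le_max_of_le_right (norm_nonneg b)
    set t : ℝ := (M / ‖c‖) ^ 2 with htdef
    have ht0 : 0 ≤ t := sq_nonneg _
    have ht1 : t < 1 := by
      have h1 : M / ‖c‖ < 1 := (div_lt_one hc).2 hMc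
      have h0 : 0 ≤ M / ‖c‖ := div_nonneg hM0 hc.le
      calc t = (M / ‖c‖) ^ 2 := rfl
        _ < 1 ^ 2 := by gcongr <;> simpa using h1
        _ = 1 := one_pow 2
    have bound : ∀ n : ℕ, ‖(padicF a b c)^[n] x‖ ≤ ‖x‖ * t ^ n := by
      intro n
      induction n with
      | zero => simp
      | succ n ih =>
        have htn1 : t ^ n ≤ 1 := pow_le_one₀ ht0 ht1.le
        have hle : ‖(padicF a b c)^[n] x‖ ≤ ‖x‖ :=
          ih.trans (mul_le_of_le_one_right (norm_nonneg x) htn1)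
        have hn : ‖(padicF a b c)^[n] x‖ < ‖c‖ := lt_of_le_of_lt hle hx
        have hmax : max ‖(padicF a b c)^[n] x‖ ‖b‖ ≤ M :=
          max_le_max hle le_rfl
        calc ‖(padicF a b c)^[n+1] x‖
            = ‖padicF a b c ((padicF a b c)^[n] x)‖ := by
              rw [Function.iterate_succ_apply']
          _ ≤ ‖(padicF a b c)^[n] x‖ * (max ‖(padicF a b c)^[n] x‖ ‖b‖ / ‖c‖) ^ 2 :=
              key1 _ hn
          _ ≤ (‖x‖ * t ^ n) * ((M / ‖c‖) ^ 2) := by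
              gcongr
          _ = ‖x‖ * t ^ (n + 1) := by rw [← htdef]; ring
    constructor
    · intro n hne
      have h1 : ‖(padicF a b c)^[n] x‖ < ‖c‖ := by
        have htn1 : t ^ n ≤ 1 := pow_le_one₀ ht0 ht1.le
        exact lt_of_le_of_lt ((bound n).trans
          (mul_le_of_le_one_right (norm_nonneg x) htn1)) hx
      rw [hne, norm_neg] at h1
      exact lt_irrefl _ h1
    · rw [tendsto_zero_iff_norm_tendsto_zero]
      have hlim : Tendsto (fun n : ℕ => ‖x‖ * t ^ n) atTop (nhds 0) := by
        have := (tendsto_pow_atTop_nhds_zero_of_lt_one ht0 ht1).const_mul ‖x‖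
        simpa using this
      exact squeeze_zero (fun n => norm_nonneg _) bound hlim
  · -- outside the ball
    intro x hx
    have norms : ∀ n : ℕ, ‖(padicF a b c)^[n] x‖ = ‖x‖ := by
      intro n
      induction n with
      | zero => simp
      | succ n ih =>
        rw [Function.iterate_succ_apply', key2 _ (ih ▸ hx : ‖c‖ < ‖(padicF a b c)^[n] x‖), ih]
    refine ⟨fun n hne => ?_, norms⟩
    have := norms n
    rw [hne, norm_neg] at this
    exact absurd this (ne_of_lt hx)
end

section
/- Suppose |a|_p > 1 and |a|_p·|b|_p² < |c|_p². Then: (i) for every x ∈ ℚ_p with |x|_p < |c|_p/√(|a|_p), the iterates fⁿ(x) are defined for all n and fⁿ(x) → 0 as n → ∞; (ii) for every x with |x|_p = |c|_p/√(|a|_p) one has |f(x)|_p = |x|_p, i.e. the sphere of radius |c|_p/√(|a|_p) centered at 0 is invariant; (iii) if |x|_p > |c|_p/√(|a|_p) and fⁿ(x) ≠ −c for all n ≥ 0, then |fⁿ(x)|_p → +∞ as n → ∞. -/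
open Filter

lemma padicF_norm {p : ℕ} [Fact p.Prime] (a b c x : ℚ_[p]) :
    ‖padicF a b c x‖ = ‖a‖ * ‖x‖ * ‖x + b‖ ^ 2 / ‖x + c‖ ^ 2 := by
  simp only [padicF, norm_mul, norm_pow, norm_div]
  ring

set_option maxHeartbeats 1000000 in
theorem padicF_dynamics_norm_a_gt_one_lt {p : ℕ} [Fact p.Prime]
    (a b c : ℚ_[p])
    (habc : a * (a - 1) * (b - c) * (a * b ^ 2 - c ^ 2) ≠ 0)
    (ha : 1 < ‖a‖) (hlt : ‖a‖ * ‖b‖ ^ 2 < ‖c‖ ^ 2) :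
    (∀ x : ℚ_[p], ‖x‖ < ‖c‖ / Real.sqrt ‖a‖ →
      (∀ n : ℕ, (padicF a b c)^[n] x ≠ -c) ∧
      Tendsto (fun n => (padicF a b c)^[n] x) atTop (nhds 0)) ∧
    (∀ x : ℚ_[p], ‖x‖ = ‖c‖ / Real.sqrt ‖a‖ → ‖padicF a b c x‖ = ‖x‖) ∧
    (∀ x : ℚ_[p], ‖c‖ / Real.sqrt ‖a‖ < ‖x‖ →
      (∀ n : ℕ, (padicF a b c)^[n] x ≠ -c) →
      Tendsto (fun n => ‖(padicF a b c)^[n] x‖) atTop atTop) := by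
  set F := padicF a b c with hF
  set r : ℝ := ‖c‖ / Real.sqrt ‖a‖ with hrdef
  have ha0 : (0:ℝ) < ‖a‖ := lt_trans one_pos ha
  have hsa : 1 < Real.sqrt ‖a‖ := by
    have := Real.sqrt_lt_sqrt (by norm_num) ha
    rwa [Real.sqrt_one] at this
  have hsa0 : (0:ℝ) < Real.sqrt ‖a‖ := lt_trans one_pos hsa
  have hc2 : (0:ℝ) < ‖c‖ ^ 2 := lt_of_le_of_lt (by positivity) hlt
  have hc0 : (0:ℝ) < ‖c‖ := by nlinarith [norm_nonneg c]
  have hr0 : (0:ℝ) < r := div_pos hc0 hsa0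
  have hr2 : r ^ 2 = ‖c‖ ^ 2 / ‖a‖ := by
    rw [hrdef, div_pow, Real.sq_sqrt ha0.le]
  have hrc : r < ‖c‖ := div_lt_self hc0 hsa
  have hb : ‖b‖ < r := by
    have h1 : ‖b‖ ^ 2 < r ^ 2 := by
      rw [hr2, lt_div_iff₀ ha0]; nlinarith
    nlinarith [norm_nonneg b]
  -- step lemma for small norms
  have step1 : ∀ (x : ℚ_[p]) (s : ℝ), ‖x‖ ≤ s → ‖b‖ ≤ s → s < ‖c‖ →
      ‖F x‖ ≤ (‖a‖ * s ^ 2 / ‖c‖ ^ 2) * ‖x‖ := by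
    intro x s hxs hbs hsc
    have hxc : ‖x + c‖ = ‖c‖ := by
      rw [Padic.add_eq_max_of_ne (by linarith [lt_of_le_of_lt hxs hsc] : ‖x‖ ≠ ‖c‖),
        max_eq_right (le_of_lt (lt_of_le_of_lt hxs hsc))]
    have hxb : ‖x + b‖ ≤ s := le_trans (Padic.nonarchimedean x b) (max_le hxs hbs)
    rw [hF, padicF_norm, hxc]
    have heq : ‖a‖ * s ^ 2 / ‖c‖ ^ 2 * ‖x‖ * ‖c‖ ^ 2 = ‖a‖ * s ^ 2 * ‖x‖ := by
      field_simp
    rw [div_le_iff₀ hc2, heq]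
    have h2 : ‖x + b‖ ^ 2 ≤ s ^ 2 := pow_le_pow_left₀ (norm_nonneg _) hxb 2
    have h3 := mul_le_mul_of_nonneg_left h2 (mul_nonneg (norm_nonneg a) (norm_nonneg x))
    nlinarith [h3]
  refine ⟨?_, ?_, ?_⟩
  · -- part (i)
    intro x hx
    set s : ℝ := max ‖x‖ ‖b‖ with hsdef
    have hs0 : 0 ≤ s := le_trans (norm_nonneg x) (le_max_left _ _)
    have hsr : s < r := max_lt hx hb
    have hsc : s < ‖c‖ := lt_trans hsr hrc
    set q : ℝ := ‖a‖ * s ^ 2 / ‖c‖ ^ 2 with hqdef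
    have hq0 : 0 ≤ q := by positivity
    have hq1 : q < 1 := by
      rw [hqdef, div_lt_one hc2]
      have : s ^ 2 < r ^ 2 := by nlinarith
      rw [hr2] at this
      calc ‖a‖ * s ^ 2 < ‖a‖ * (‖c‖^2 / ‖a‖) := by nlinarith
        _ = ‖c‖ ^ 2 := by field_simp
    have claim : ∀ n : ℕ, ‖F^[n] x‖ ≤ q ^ n * ‖x‖ := by
      intro n
      induction n with
      | zero => simp
      | succ n ih =>
        rw [Function.iterate_succ_apply']
        have hle : ‖F^[n] x‖ ≤ s := by
          calc ‖F^[n] x‖ ≤ q ^ n * ‖x‖ := ih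
            _ ≤ 1 * ‖x‖ := by
                have := pow_le_one₀ hq0 hq1.le (n := n)
                nlinarith [norm_nonneg x, pow_nonneg hq0 n]
            _ ≤ s := by rw [one_mul]; exact le_max_left _ _
        calc ‖F (F^[n] x)‖ ≤ q * ‖F^[n] x‖ := step1 _ s hle (le_max_right _ _) hsc
          _ ≤ q * (q ^ n * ‖x‖) := by nlinarith
          _ = q ^ (n+1) * ‖x‖ := by ring
    have hbound : ∀ n : ℕ, ‖F^[n] x‖ < ‖c‖ := by
      intro n
      calc ‖F^[n] x‖ ≤ q ^ n * ‖x‖ := claim n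
        _ ≤ 1 * ‖x‖ := by
            have := pow_le_one₀ hq0 hq1.le (n := n)
            nlinarith [norm_nonneg x, pow_nonneg hq0 n]
        _ < ‖c‖ := by rw [one_mul]; exact lt_trans hx hrc
    refine ⟨fun n hn => ?_, ?_⟩
    · have := hbound n
      rw [hn, norm_neg] at this
      exact lt_irrefl _ this
    · exact tendsto_zero_iff_norm_tendsto_zero.mpr
        (squeeze_zero (fun n => norm_nonneg _) claim
          (by simpa using (tendsto_pow_atTop_nhds_zero_of_lt_one hq0 hq1).mul_const ‖x‖))
  · -- part (ii)
    intro x hx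
    have hxb : ‖x + b‖ = ‖x‖ := by
      rw [Padic.add_eq_max_of_ne (by rw [hx]; exact (ne_of_lt hb).symm),
        max_eq_left (by rw [hx]; exact hb.le)]
    have hxc : ‖x + c‖ = ‖c‖ := by
      rw [Padic.add_eq_max_of_ne (by rw [hx]; exact ne_of_lt hrc),
        max_eq_right (by rw [hx]; exact hrc.le)]
    rw [hF, padicF_norm, hxb, hxc, hx]
    rw [div_eq_iff hc2.ne']
    have : r ^ 2 * ‖a‖ = ‖c‖ ^ 2 := by rw [hr2]; field_simp
    nlinarith
  · -- part (iii)
    intro x hx hne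
    set ρ : ℝ := min ‖a‖ (‖a‖ * ‖x‖ ^ 2 / ‖c‖ ^ 2) with hρdef
    have hx0 : 0 < ‖x‖ := lt_trans hr0 hx
    have hρ1 : 1 < ρ := by
      refine lt_min ha ?_
      rw [lt_div_iff₀ hc2, one_mul]
      have h1 : r ^ 2 < ‖x‖ ^ 2 := by nlinarith
      rw [hr2] at h1
      calc ‖c‖ ^ 2 = ‖a‖ * (‖c‖ ^ 2 / ‖a‖) := by field_simp
        _ < ‖a‖ * ‖x‖ ^ 2 := by nlinarith
    have hρ0 : 0 < ρ := lt_trans one_pos hρ1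
    -- key step
    have step3 : ∀ y : ℚ_[p], ‖x‖ ≤ ‖y‖ → y ≠ -c → ρ * ‖y‖ ≤ ‖F y‖ := by
      intro y hy hyne
      have hy0 : 0 < ‖y‖ := lt_of_lt_of_le hx0 hy
      have hyb : ‖y + b‖ = ‖y‖ := by
        have hby : ‖b‖ < ‖y‖ := lt_of_lt_of_le (lt_trans hb hx) hy
        rw [Padic.add_eq_max_of_ne (show ‖y‖ ≠ ‖b‖ from (ne_of_lt hby).symm), max_eq_left hby.le]
      have hycne : y + c ≠ 0 := by
        intro h; exact hyne (eq_neg_of_add_eq_zero_left h)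
      have hyc2 : (0:ℝ) < ‖y + c‖ ^ 2 := pow_pos (norm_pos_iff.mpr hycne) 2
      rw [hF, padicF_norm, hyb, le_div_iff₀ hyc2]
      rcases le_or_gt ‖c‖ ‖y‖ with hcase | hcase
      · have hyc : ‖y + c‖ ≤ ‖y‖ :=
          le_trans (Padic.nonarchimedean y c) (max_le le_rfl hcase)
        have hρa : ρ ≤ ‖a‖ := min_le_left _ _
        gcongr <;> first | exact hρ0.le | exact hρa | exact hyc
      · have hyc : ‖y + c‖ = ‖c‖ := by
          rw [Padic.add_eq_max_of_ne (ne_of_lt hcase), max_eq_right hcase.le]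
        rw [hyc]
        have hρ2 : ρ * ‖c‖ ^ 2 ≤ ‖a‖ * ‖x‖ ^ 2 := by
          have := min_le_right ‖a‖ (‖a‖ * ‖x‖ ^ 2 / ‖c‖ ^ 2)
          rw [hρdef]
          calc min ‖a‖ (‖a‖ * ‖x‖ ^ 2 / ‖c‖ ^ 2) * ‖c‖ ^ 2
              ≤ (‖a‖ * ‖x‖ ^ 2 / ‖c‖ ^ 2) * ‖c‖ ^ 2 := by nlinarith
            _ = ‖a‖ * ‖x‖ ^ 2 := by field_simp
        have hx2 : ‖x‖ ^ 2 ≤ ‖y‖ ^ 2 := by nlinarith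
        have h3 : ρ * ‖c‖ ^ 2 ≤ ‖a‖ * ‖y‖ ^ 2 := by nlinarith
        nlinarith [mul_le_mul_of_nonneg_left h3 hy0.le]
    have claim : ∀ n : ℕ, ‖x‖ ≤ ‖F^[n] x‖ ∧ ρ ^ n * ‖x‖ ≤ ‖F^[n] x‖ := by
      intro n
      induction n with
      | zero => simp
      | succ n ih =>
        obtain ⟨ih1, ih2⟩ := ih
        have hstep := step3 (F^[n] x) ih1 (hne n)
        rw [Function.iterate_succ_apply']
        constructor
        · calc ‖x‖ ≤ ‖F^[n] x‖ := ih1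
            _ ≤ ρ * ‖F^[n] x‖ := by nlinarith [lt_of_lt_of_le hx0 ih1]
            _ ≤ ‖F (F^[n] x)‖ := hstep
        · calc ρ ^ (n+1) * ‖x‖ = ρ * (ρ ^ n * ‖x‖) := by ring
            _ ≤ ρ * ‖F^[n] x‖ := by nlinarith
            _ ≤ ‖F (F^[n] x)‖ := hstep
    refine tendsto_atTop_mono (fun n => (claim n).2) ?_
    exact (tendsto_pow_atTop_atTop_of_one_lt hρ1).atTop_mul_const hx0
end

section
/- Suppose |b|_p = |c|_p and |a|_p < 1, and set H = {|a|_p^{-k}·|b|_p : k = 0,1,2,…}. Then for every x ∈ ℚ_p whose norm |x|_p does not belong to H, the iterates fⁿ(x) are defined for all n (the orbit never meets −c) and fⁿ(x) → 0 as n → ∞. -/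
open Filter

theorem padicF_tendsto_zero_norm_b_eq_norm_c_norm_a_lt_one {p : ℕ} [Fact p.Prime]
    (a b c : ℚ_[p])
    (habc : a * (a - 1) * (b - c) * (a * b ^ 2 - c ^ 2) ≠ 0)
    (hbc : ‖b‖ = ‖c‖) (ha : ‖a‖ < 1)
    (x : ℚ_[p]) (hx : ∀ k : ℕ, ‖x‖ ≠ ‖b‖ / ‖a‖ ^ k) :
    (∀ n : ℕ, (padicF a b c)^[n] x ≠ -c) ∧
    Tendsto (fun n => (padicF a b c)^[n] x) atTop (nhds 0) := by
  have ha0 : a ≠ 0 := by intro h; apply habc; rw [h]; ring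
  have hc0 : c ≠ 0 := by
    intro h
    have hb : b = 0 := by
      rw [h, norm_zero] at hbc; exact norm_eq_zero.mp hbc
    apply habc; rw [h, hb]; ring
  have hb0 : b ≠ 0 := by
    intro h
    rw [h, norm_zero] at hbc
    exact hc0 (norm_eq_zero.mp hbc.symm)
  have hbpos : (0:ℝ) < ‖b‖ := norm_pos_iff.mpr hb0
  have hanorm0 : ‖a‖ ≠ 0 := norm_ne_zero_iff.mpr ha0
  have key : ∀ y : ℚ_[p], (∀ k : ℕ, ‖y‖ ≠ ‖b‖ / ‖a‖ ^ k) →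
      y ≠ -c ∧ ‖padicF a b c y‖ = ‖a‖ * ‖y‖ := by
    intro y hy
    have hy0 : ‖y‖ ≠ ‖b‖ := by simpa using hy 0
    have hyc' : ‖y‖ ≠ ‖c‖ := hbc ▸ hy0
    have hyc : y ≠ -c := by
      intro h; exact hyc' (by rw [h, norm_neg])
    refine ⟨hyc, ?_⟩
    have h1 : ‖y + b‖ = max ‖y‖ ‖b‖ := Padic.add_eq_max_of_ne hy0
    have h2 : ‖y + c‖ = max ‖y‖ ‖c‖ := Padic.add_eq_max_of_ne hyc'
    have heq : ‖y + b‖ = ‖y + c‖ := by rw [h1, h2, hbc]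
    have hycpos : (0:ℝ) < ‖y + c‖ := by
      rw [h2]
      exact lt_max_of_lt_right (by rw [← hbc]; exact hbpos)
    have hratio : ‖(y + b) / (y + c)‖ = 1 := by
      rw [norm_div, heq, div_self (ne_of_gt hycpos)]
    simp only [padicF, norm_mul, norm_pow, hratio]
    ring
  have main : ∀ n : ℕ, (∀ k : ℕ, ‖(padicF a b c)^[n] x‖ ≠ ‖b‖ / ‖a‖ ^ k) ∧
      ‖(padicF a b c)^[n] x‖ = ‖a‖ ^ n * ‖x‖ := by
    intro n
    induction n with
    | zero => simpa using hx
    | succ n ih =>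
      obtain ⟨h1, h2⟩ := ih
      obtain ⟨-, hnorm⟩ := key _ h1
      rw [Function.iterate_succ_apply']
      constructor
      · intro k hk
        rw [hnorm] at hk
        apply h1 (k + 1)
        rw [pow_succ]
        field_simp at hk ⊢
        linarith [hk]
      · rw [hnorm, h2, pow_succ]; ring
  constructor
  · intro n
    exact (key _ (main n).1).1
  · rw [tendsto_zero_iff_norm_tendsto_zero]
    have : (fun n => ‖(padicF a b c)^[n] x‖) = fun n => ‖a‖ ^ n * ‖x‖ := by
      funext n; exact (main n).2
    rw [this]
    have h0 : Tendsto (fun n : ℕ => ‖a‖ ^ n) atTop (nhds 0) :=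
      tendsto_pow_atTop_nhds_zero_of_lt_one (norm_nonneg a) ha
    simpa using h0.mul_const ‖x‖
end
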